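/- For integers m, n ≥ 3, the connected power domination number of the Cartesian product of the complete graph K_m with the star K_{1,n} satisfies γ_{P,c}(K_m □ K_{1,n}) = min{m − 1, n}. -/

import Mathlib

open SimpleGraph

variable {V : Type*} {α β : Type*}

/-- The monitored set `M(S)`: least set containing the closed neighborhood of `S`
and closed under the propagation rule (a monitored vertex all of whose neighbors,
except possibly one, are monitored forces that remaining neighbor). -/
inductive Monitored (G : SimpleGraph V) (S : Set V) : V → Prop
  | mem : ∀ {v}, v ∈ S → Monitored G S v
  | dom : ∀ {v w}, v ∈ S → G.Adj v w → Monitored G S w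
  | prop : ∀ {v w}, Monitored G S v → G.Adj v w →
      (∀ u, G.Adj v u → u ≠ w → Monitored G S u) → Monitored G S w

/-- `S` is a power dominating set of `G`. -/
def IsPDS (G : SimpleGraph V) (S : Set V) : Prop := ∀ v, Monitored G S v

/-- `S` is a connected power dominating set of `G`. -/
def IsCPDS (G : SimpleGraph V) (S : Set V) : Prop :=
  IsPDS G S ∧ (G.induce S).Connected

/-- The connected power domination number `γ_{P,c}(G)`. -/
noncomputable def cpdn (G : SimpleGraph V) : ℕ :=
  sInf {n | ∃ S : Finset V, S.card = n ∧ IsCPDS G (S : Set V)}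

/-- Zero-forcing: least set containing `Z` closed under the color-change rule. -/
inductive Forced (G : SimpleGraph V) (Z : Set V) : V → Prop
  | mem : ∀ {v}, v ∈ Z → Forced G Z v
  | force : ∀ {v w}, Forced G Z v → G.Adj v w →
      (∀ u, G.Adj v u → u ≠ w → Forced G Z u) → Forced G Z w

/-- `Z` is a zero forcing set of `G`. -/
def IsZFS (G : SimpleGraph V) (Z : Set V) : Prop := ∀ v, Forced G Z v

/-- `Z` is a connected zero forcing set of `G`. -/
def IsCZFS (G : SimpleGraph V) (Z : Set V) : Prop :=
  IsZFS G Z ∧ (G.induce Z).Connected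

/-- The connected zero forcing number `Z_c(G)`. -/
noncomputable def czfn (G : SimpleGraph V) : ℕ :=
  sInf {n | ∃ Z : Finset V, Z.card = n ∧ IsCZFS G (Z : Set V)}

/-- `S` is a dominating set of `G`: `N[S] = V(G)`. -/
def IsDomSet (G : SimpleGraph V) (S : Set V) : Prop :=
  ∀ v, ∃ u ∈ S, u = v ∨ G.Adj u v

/-- `S` is a connected dominating set of `G`. -/
def IsCDS (G : SimpleGraph V) (S : Set V) : Prop :=
  IsDomSet G S ∧ (G.induce S).Connected

/-- The domination number `γ(G)`. -/
noncomputable def domNum (G : SimpleGraph V) : ℕ :=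
  sInf {n | ∃ S : Finset V, S.card = n ∧ IsDomSet G (S : Set V)}

/-- The connected domination number `γ_c(G)`. -/
noncomputable def cdomNum (G : SimpleGraph V) : ℕ :=
  sInf {n | ∃ S : Finset V, S.card = n ∧ IsCDS G (S : Set V)}

/-- The lexicographic product `G ∘ H`. -/
def lexProd (G : SimpleGraph α) (H : SimpleGraph β) : SimpleGraph (α × β) where
  Adj x y := G.Adj x.1 y.1 ∨ (x.1 = y.1 ∧ H.Adj x.2 y.2)
  symm := by
    constructor
    rintro ⟨a, b⟩ ⟨c, d⟩ (h | ⟨h1, h2⟩)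
    · exact Or.inl h.symm
    · exact Or.inr ⟨h1.symm, h2.symm⟩
  loopless := by
    constructor
    rintro ⟨a, b⟩ (h | ⟨-, h⟩)
    · exact G.loopless.irrefl a h
    · exact H.loopless.irrefl b h

/-- The tensor (direct) product `G × H`. -/
def tensorProd (G : SimpleGraph α) (H : SimpleGraph β) : SimpleGraph (α × β) where
  Adj x y := G.Adj x.1 y.1 ∧ H.Adj x.2 y.2
  symm := ⟨fun _ _ ⟨h1, h2⟩ => ⟨h1.symm, h2.symm⟩⟩
  loopless := ⟨fun x ⟨h1, _⟩ => G.loopless.irrefl x.1 h1⟩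

/-- A vertex `v` is universal in `G`. -/
def IsUniversal (G : SimpleGraph V) (v : V) : Prop := ∀ w, w ≠ v → G.Adj v w

/-- The join of a single vertex (`none`) with the graph `G` (on `some` vertices). -/
def coneGraph (G : SimpleGraph α) : SimpleGraph (Option α) where
  Adj x y := match x, y with
    | none, none => False
    | none, some _ => True
    | some _, none => True
    | some a, some b => G.Adj a b
  symm := by constructor; rintro (_ | a) (_ | b) h <;> first | trivial | exact h.symm
  loopless := by constructor; rintro (_ | a) h <;> first | trivial | exact G.loopless.irrefl a h

/-- The wheel `W_n`: the join of a single vertex with the cycle `C_n`. -/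
def wheelGraph (n : ℕ) : SimpleGraph (Option (Fin n)) := coneGraph (cycleGraph n)

/-- The fan `F_n`: the join of a single vertex with the path `P_n`. -/
def fanGraph (n : ℕ) : SimpleGraph (Option (Fin n)) := coneGraph (pathGraph n)

/-!
Write the vertices of `K_m □ K_{1,n}` as `(i, c)` (copies of the star centre) and `(i, j)`
(copies of the leaves). All centres but one, or one whole star row but one leaf, are connected
power dominating sets of sizes `m - 1` and `n`.

Conversely, let `A` be the rows whose centre lies in `S` and `J` the leaves that occur in `S`, so
`|A| + |J| ≤ |S|`. If two rows avoid `A` and two leaves avoid `J`, no vertex `(i, j)` with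
`i ∉ A`, `j ∉ J` is ever monitored: the remaining vertices are closed under propagation, since
each of them adjacent to such a vertex has a second such neighbour. This happens once
`|S| < min (m - 1) n`, because a connected `S` meeting no centre lies in a single leaf column,
so that `|J| ≤ 1 ≤ n - 2`.
-/

open Finset

lemma cpdn_le_card {G : SimpleGraph V} {S : Finset V} (hS : IsCPDS G S) : cpdn G ≤ S.card :=
  Nat.sInf_le ⟨S, rfl, hS⟩

lemma le_cpdn {G : SimpleGraph V} {k : ℕ} {S : Finset V} (hS : IsCPDS G S)
    (h : ∀ T : Finset V, IsCPDS G T → k ≤ T.card) : k ≤ cpdn G :=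
  le_csInf ⟨_, S, rfl, hS⟩ (by rintro _ ⟨T, rfl, hT⟩; exact h T hT)

lemma SimpleGraph.induce_connected_of_forall_adj {G : SimpleGraph V} {s : Set V} {c : V}
    (hc : c ∈ s) (h : ∀ v ∈ s, v ≠ c → G.Adj c v) : (G.induce s).Connected := by
  rw [connected_iff_exists_forall_reachable]
  refine ⟨⟨c, hc⟩, fun ⟨v, hv⟩ => ?_⟩
  by_cases hvc : v = c
  · subst hvc; rfl
  · exact Adj.reachable (h v hv hvc)

lemma Finset.exists_notMem_ne_of_card_add_two_le [Fintype α] [DecidableEq α] {s : Finset α}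
    (h : #s + 2 ≤ Fintype.card α) (a : α) : ∃ b ∉ s, b ≠ a := by
  have : #(insert a s) < #(univ : Finset α) := by
    rw [card_univ]; exact (card_insert_le a s).trans_lt (by omega)
  obtain ⟨b, -, hb⟩ := exists_mem_notMem_of_card_lt_card this
  exact ⟨b, fun h => hb (mem_insert_of_mem h), fun h => hb (h ▸ mem_insert_self a s)⟩

abbrev completeBoxStar (α β : Type*) : SimpleGraph (α × (Fin 1 ⊕ β)) :=
  (⊤ : SimpleGraph α) □ completeBipartiteGraph (Fin 1) β

namespace completeBoxStar

section Adjacency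

variable {i i' : α} {a : Fin 1} {j j' : β}

@[simp] lemma adj_inl_inr : (completeBoxStar α β).Adj (i, .inl a) (i', .inr j) ↔ i = i' := by
  simp [boxProd_adj]

@[simp] lemma adj_inr_inl : (completeBoxStar α β).Adj (i, .inr j) (i', .inl a) ↔ i = i' := by
  simp [boxProd_adj]

@[simp] lemma adj_inr_inr :
    (completeBoxStar α β).Adj (i, .inr j) (i', .inr j') ↔ i ≠ i' ∧ j = j' := by
  simp [boxProd_adj]

end Adjacency

lemma mem_or_mem_of_monitored_inr {S : Set (α × (Fin 1 ⊕ β))} {A : Set α} {J : Set β}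
    (hA : ∀ i, (i, .inl 0) ∈ S → i ∈ A) (hJ : ∀ i j, (i, .inr j) ∈ S → j ∈ J)
    (hA₂ : ∀ i, ∃ i' ∉ A, i' ≠ i) (hJ₂ : ∀ j, ∃ j' ∉ J, j' ≠ j)
    {i : α} {j : β} (h : Monitored (completeBoxStar α β) S (i, .inr j)) :
    i ∈ A ∨ j ∈ J := by
  generalize hw : (i, Sum.inr j) = w at h
  induction h generalizing i j with
  | mem hv => subst hw; exact .inr (hJ _ _ hv)
  | @dom v _ hv hadj =>
    subst hw
    obtain ⟨i', a | j'⟩ := v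
    · simp only [adj_inl_inr] at hadj; subst hadj
      exact .inl (hA _ (Subsingleton.elim a 0 ▸ hv))
    · simp only [adj_inr_inr] at hadj; obtain ⟨-, rfl⟩ := hadj
      exact .inr (hJ _ _ hv)
  | @prop v _ _ hadj hrest ihv ihrest =>
    subst hw
    by_contra! hij
    obtain ⟨i', a | j'⟩ := v
    · simp only [adj_inl_inr] at hadj; subst hadj
      obtain ⟨j', hj', hj'j⟩ := hJ₂ j
      have := ihrest (i', .inr j') (by simp) (by simpa using hj'j) rfl
      tauto
    · simp only [adj_inr_inr] at hadj; obtain ⟨hi'i, rfl⟩ := hadj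
      have hi' : i' ∈ A := (ihv rfl).resolve_right hij.2
      obtain ⟨i'', hi'', hi''i⟩ := hA₂ i
      have := ihrest (i'', .inr j') (by simpa using fun h : i' = i'' => hi'' (h ▸ hi'))
        (by simpa using hi''i) rfl
      tauto

lemma snd_eq_of_connected {S : Set (α × (Fin 1 ⊕ β))}
    (hS : ((completeBoxStar α β).induce S).Connected) (hcenter : ∀ i a, (i, .inl a) ∉ S)
    {p q : α × (Fin 1 ⊕ β)} (hp : p ∈ S) (hq : q ∈ S) : p.2 = q.2 := by
  have hreach := (reachable_iff_reflTransGen _ _).1 (hS.preconnected ⟨p, hp⟩ ⟨q, hq⟩)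
  have hcolumn :
      ((completeBoxStar α β).induce S).Adj ≤ Function.onFun Eq fun x : S => x.1.2 := by
    rintro ⟨⟨i, a | j⟩, hx⟩ ⟨⟨i', a' | j'⟩, hy⟩ hadj
    · exact absurd hx (hcenter _ _)
    · exact absurd hx (hcenter _ _)
    · exact absurd hy (hcenter _ _)
    · simp only [comap_adj, Function.Embedding.subtype_apply, adj_inr_inr] at hadj
      simp [Function.onFun, hadj.2]
  simpa [Relation.reflTransGen_eq_self] using hreach.lift _ hcolumn

theorem min_le_card_of_isCPDS [Fintype α] [Fintype β] [DecidableEq α] [DecidableEq β]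
    (hβ : 3 ≤ Fintype.card β) {S : Finset (α × (Fin 1 ⊕ β))}
    (hS : IsCPDS (completeBoxStar α β) S) :
    min (Fintype.card α - 1) (Fintype.card β) ≤ #S := by
  set T := S.image fun p : α × (Fin 1 ⊕ β) => p.2.elim (fun _ => (.inl p.1 : α ⊕ β)) .inr
  set A := T.toLeft
  set J := T.toRight
  have mem_A {i : α} : i ∈ A ↔ (i, .inl 0) ∈ S := by
    simp only [A, T, mem_toLeft, mem_image]
    constructor
    · rintro ⟨⟨i', a | j⟩, hp, h⟩ <;> simp at h
      rwa [Subsingleton.elim a 0, h] at hp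
    · exact fun h => ⟨_, h, rfl⟩
  have mem_J {j : β} : j ∈ J ↔ ∃ i, (i, .inr j) ∈ S := by
    simp only [J, T, mem_toRight, mem_image]
    constructor
    · rintro ⟨⟨i, a | j'⟩, hp, h⟩ <;> simp at h
      exact ⟨i, h ▸ hp⟩
    · exact fun ⟨i, h⟩ => ⟨_, h, rfl⟩
  have hAJ : #A + #J ≤ #S := card_toLeft_add_card_toRight (u := T) ▸ card_image_le
  by_contra! hlt
  rw [lt_min_iff] at hlt
  have hA₂ : #A + 2 ≤ Fintype.card α := by omega
  have hJ₂ : #J + 2 ≤ Fintype.card β := by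
    rcases A.eq_empty_or_nonempty with hA | hA
    · have hcenter (i : α) (a : Fin 1) : ((i, .inl a) : α × (Fin 1 ⊕ β)) ∉ (S : Set _) :=
        fun h => by simpa [hA] using mem_A.2 (Subsingleton.elim a 0 ▸ h)
      have : #J ≤ 1 := card_le_one.2 fun j hj j' hj' => by
        obtain ⟨i, hi⟩ := mem_J.1 hj
        obtain ⟨i', hi'⟩ := mem_J.1 hj'
        simpa using snd_eq_of_connected hS.2 hcenter hi hi'
      omega
    · have := hA.card_pos
      omega
  obtain ⟨i, -, hi⟩ :=
    exists_mem_notMem_of_card_lt_card (s := A) (t := univ) (by rw [card_univ]; omega)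
  obtain ⟨j, -, hj⟩ :=
    exists_mem_notMem_of_card_lt_card (s := J) (t := univ) (by rw [card_univ]; omega)
  have := mem_or_mem_of_monitored_inr (A := A) (J := J)
    (fun _ h => mem_A.2 h) (fun _ _ h => mem_J.2 ⟨_, h⟩)
    (exists_notMem_ne_of_card_add_two_le hA₂) (exists_notMem_ne_of_card_add_two_le hJ₂)
    (hS.1 (i, .inr j))
  simp_all

lemma isCPDS_erase_prod_inl [Fintype α] [DecidableEq α] {a₀ a₁ : α} (h : a₁ ≠ a₀) :
    IsCPDS (completeBoxStar α β) ↑((univ.erase a₀) ×ˢ {(.inl 0 : Fin 1 ⊕ β)}) := by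
  have hmem {i : α} (hi : i ≠ a₀) :
      (i, (.inl 0 : Fin 1 ⊕ β)) ∈ (univ.erase a₀) ×ˢ {.inl 0} := by
    simp [hi]
  have hleaf {i : α} (hi : i ≠ a₀) (j : β) : Monitored (completeBoxStar α β)
      ↑((univ.erase a₀) ×ˢ {(.inl 0 : Fin 1 ⊕ β)}) (i, .inr j) :=
    .dom (hmem hi) (by simp)
  refine ⟨?_, induce_connected_of_forall_adj (hmem h) ?_⟩
  · rintro ⟨i, a | j⟩
    · rw [Subsingleton.elim a 0]
      by_cases hi : i = a₀
      · exact .dom (hmem h) (by simp [hi, h])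
      · exact .mem (hmem hi)
    · by_cases hi : i = a₀
      · rw [hi]
        refine .prop (hleaf h j) (by simp [h]) ?_
        rintro ⟨i', a' | j'⟩ hadj hne
        · simp only [adj_inr_inl] at hadj
          rw [← hadj, Subsingleton.elim a' 0]
          exact .mem (hmem h)
        · simp only [adj_inr_inr] at hadj
          obtain ⟨-, rfl⟩ := hadj
          exact hleaf (by simpa using hne) j
      · exact hleaf hi j
  · rintro ⟨i, a | j⟩ hv hne <;> simp at hv ⊢
    obtain ⟨-, rfl⟩ := hv
    simpa [eq_comm] using hne

lemma isCPDS_singleton_prod_erase_inr [Fintype β] [DecidableEq β] (a₀ : α) (b₀ : β) :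
    IsCPDS (completeBoxStar α β)
      ↑(({a₀} : Finset α) ×ˢ univ.erase (.inr b₀ : Fin 1 ⊕ β)) := by
  set S : Finset (α × (Fin 1 ⊕ β)) := {a₀} ×ˢ univ.erase (.inr b₀)
  have hcenter (i : α) : Monitored (completeBoxStar α β) S (i, .inl 0) := by
    by_cases hi : i = a₀
    · exact .mem (by simp [S, hi])
    · exact .dom (v := (a₀, .inl 0)) (by simp [S]) (by simp [Ne.symm hi])
  have hleaf (i : α) {j : β} (hj : j ≠ b₀) :
      Monitored (completeBoxStar α β) S (i, .inr j) := by
    by_cases hi : i = a₀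
    · exact .mem (by simp [S, hi, hj])
    · exact .dom (v := (a₀, .inr j)) (by simp [S, hj]) (by simp [Ne.symm hi])
  refine ⟨?_, induce_connected_of_forall_adj (c := (a₀, .inl 0)) (by simp [S]) ?_⟩
  · rintro ⟨i, a | j⟩
    · exact Subsingleton.elim a 0 ▸ hcenter i
    · by_cases hj : j = b₀
      · subst hj
        refine .prop (hcenter i) (by simp) ?_
        rintro ⟨i', a' | j'⟩ hadj hne
        · exact Subsingleton.elim a' 0 ▸ hcenter i'
        · simp only [adj_inl_inr] at hadj
          subst hadj
          exact hleaf i (by simpa using hne)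
      · exact hleaf i hj
  · rintro ⟨i, a | j⟩ hv hne <;> simp [S] at hv ⊢
    · simp [hv, Subsingleton.elim a 0] at hne
    · exact hv.2

end completeBoxStar

/-- `γ_{P,c}(K_m □ K_{1,n}) = min{m - 1, n}` for `m, n ≥ 3`. -/
theorem stmt_10 (m n : ℕ) (hm : 3 ≤ m) (hn : 3 ≤ n) :
    cpdn ((⊤ : SimpleGraph (Fin m)) □ completeBipartiteGraph (Fin 1) (Fin n)) =
      min (m - 1) n := by
  have hS₁ := completeBoxStar.isCPDS_erase_prod_inl (α := Fin m) (β := Fin n)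
    (a₀ := ⟨0, by omega⟩) (a₁ := ⟨1, by omega⟩) (by simp)
  have hS₂ := completeBoxStar.isCPDS_singleton_prod_erase_inr
    (⟨0, by omega⟩ : Fin m) (⟨0, by omega⟩ : Fin n)
  refine le_antisymm (le_min ?_ ?_) (le_cpdn hS₁ fun T hT => ?_)
  · simpa using cpdn_le_card hS₁
  · simpa using cpdn_le_card hS₂
  · simpa using completeBoxStar.min_le_card_of_isCPDS (by simpa using hn) hT
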